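/- arXiv:2511.03024 — 2 statements merged into one kernel-verified Lean document; each statement's English description precedes it below -/
import Mathlib

section
/- Let N be a lattice of rank n and Σ a complete rational polyhedral fan in N⊗ℚ. Fix a ray ρ of Σ with primitive generator p_ρ. Then the set 𝔯'_ρ = { m ∈ M⊗ℚ : ⟨p_ρ, m⟩ = −1 and ⟨p_ρ', m⟩ ≥ 0 for all rays ρ' ≠ ρ of Σ } is bounded. -/
/-!
Every vector `x` lies in some cone of the complete fan, so `x = ∑ c_v v` with `c_v ≥ 0` over
ray generators `v`. On `𝔯'_ρ` each term `c_v ⟨v, m⟩` is nonnegative except the one for `v = p`,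
which equals `-c_p`; hence every linear functional is bounded below on `𝔯'_ρ`. Applying this
to `±eᵢ` bounds every coordinate.
-/

open Matrix

/-- The convex cone of nonnegative rational combinations of a finite set of vectors. -/
def coneOf {n : ℕ} (S : Finset (Fin n → ℚ)) : Set (Fin n → ℚ) :=
  { x | ∃ c : (Fin n → ℚ) → ℚ, (∀ v, 0 ≤ c v) ∧ x = ∑ v ∈ S, c v • v }

/-- `F` is a face of the cone `σ` cut out by a supporting linear functional. -/
def IsFaceOf {n : ℕ} (F σ : Set (Fin n → ℚ)) : Prop :=
  ∃ m : Fin n → ℚ, (∀ x ∈ σ, 0 ≤ m ⬝ᵥ x) ∧ F = {x ∈ σ | m ⬝ᵥ x = 0}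

/-- A rational polyhedral fan in `ℚ^n`, presented by the (primitive) generators of its
rays together with its collection of cones. -/
structure Fan (n : ℕ) where
  rays : Finset (Fin n → ℚ)
  cones : Set (Set (Fin n → ℚ))
  finite_cones : cones.Finite
  polyhedral : ∀ σ ∈ cones, ∃ S : Finset (Fin n → ℚ),
    ↑S ⊆ (rays : Set (Fin n → ℚ)) ∧ σ = coneOf S
  pointed : ∀ σ ∈ cones, σ ∩ (-σ) ⊆ {0}
  inter_face : ∀ σ ∈ cones, ∀ τ ∈ cones, IsFaceOf (σ ∩ τ) σ
  ray_mem : ∀ p ∈ rays, coneOf {p} ∈ cones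

/-- A fan is complete if its cones cover `ℚ^n`. -/
def Fan.IsComplete {n : ℕ} (F : Fan n) : Prop := ⋃ σ ∈ F.cones, σ = Set.univ

theorem exists_forall_abs_le_of_forall_bddBelow_dotProduct {ι K : Type*} [Fintype ι]
    [DecidableEq ι] [Field K] [LinearOrder K] [IsStrictOrderedRing K] {P : Set (ι → K)}
    (h : ∀ x : ι → K, BddBelow ((x ⬝ᵥ ·) '' P)) :
    ∃ C : K, ∀ m ∈ P, ∀ i, |m i| ≤ C := by
  have coord : ∀ i, ∃ C : K, ∀ m ∈ P, |m i| ≤ C := by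
    intro i
    obtain ⟨a, ha⟩ := h (Pi.single i 1)
    obtain ⟨b, hb⟩ := h (-Pi.single i 1)
    refine ⟨max (-a) (-b), fun m hm => abs_le.2 ⟨?_, ?_⟩⟩
    · have := ha (Set.mem_image_of_mem _ hm)
      rw [single_dotProduct, one_mul] at this
      linarith [le_max_left (-a) (-b)]
    · have := hb (Set.mem_image_of_mem _ hm)
      rw [neg_dotProduct, single_dotProduct, one_mul] at this
      linarith [le_max_right (-a) (-b)]
  choose C hC using coord
  refine ⟨∑ i, |C i|, fun m hm i => ?_⟩
  calc |m i| ≤ |C i| := (hC i m hm).trans (le_abs_self _)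
    _ ≤ ∑ j, |C j| := Finset.single_le_sum (fun j _ => abs_nonneg (C j)) (Finset.mem_univ i)

theorem bddBelow_dotProduct_of_mem_coneOf {n : ℕ} {S : Finset (Fin n → ℚ)} {x : Fin n → ℚ}
    (hx : x ∈ coneOf S) (p : Fin n → ℚ) :
    BddBelow ((x ⬝ᵥ ·) '' {m | p ⬝ᵥ m = -1 ∧ ∀ q ∈ S, q ≠ p → 0 ≤ q ⬝ᵥ m}) := by
  obtain ⟨c, hc, rfl⟩ := hx
  refine ⟨-c p, ?_⟩
  rintro _ ⟨m, ⟨hpm, hqm⟩, rfl⟩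
  have term_ge : ∀ v ∈ S, (if v = p then -c p else 0) ≤ (c v • v) ⬝ᵥ m := by
    intro v hv
    rw [smul_dotProduct, smul_eq_mul]
    split_ifs with hvp
    · rw [hvp, hpm, mul_neg_one]
    · exact mul_nonneg (hc v) (hqm v hv hvp)
  calc -c p ≤ ∑ v ∈ S, (if v = p then -c p else 0) := by
        rw [Finset.sum_ite_eq']
        split_ifs <;> linarith [hc p]
    _ ≤ ∑ v ∈ S, (c v • v) ⬝ᵥ m := Finset.sum_le_sum term_ge
    _ = (∑ v ∈ S, c v • v) ⬝ᵥ m := (sum_dotProduct _ _ _).symm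

theorem demazure_root_polyhedron_bounded_general {n : ℕ} (F : Fan n) (hF : F.IsComplete)
    (p : Fin n → ℚ) :
    ∃ C : ℚ, ∀ m : Fin n → ℚ,
      (p ⬝ᵥ m = -1 ∧ ∀ q ∈ F.rays, q ≠ p → 0 ≤ q ⬝ᵥ m) → ∀ i, |m i| ≤ C := by
  refine exists_forall_abs_le_of_forall_bddBelow_dotProduct fun x => ?_
  obtain ⟨σ, hσ, hxσ⟩ := Set.mem_iUnion₂.1 (hF.symm ▸ Set.mem_univ x)
  obtain ⟨S, hS, rfl⟩ := F.polyhedral σ hσ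
  refine (bddBelow_dotProduct_of_mem_coneOf hxσ p).mono (Set.image_mono ?_)
  exact fun m ⟨hpm, hqm⟩ => ⟨hpm, fun q hq => hqm q (hS hq)⟩

/-- for a complete fan and a fixed ray generator `p`, the set
`𝔯'_ρ = { m : ⟨p, m⟩ = -1 and ⟨q, m⟩ ≥ 0 for all other ray generators q }` is bounded. -/
theorem demazure_root_polyhedron_bounded {n : ℕ} (F : Fan n) (hF : F.IsComplete)
    (p : Fin n → ℚ) (hp : p ∈ F.rays) :
    ∃ C : ℚ, ∀ m : Fin n → ℚ,
      (p ⬝ᵥ m = -1 ∧ ∀ q ∈ F.rays, q ≠ p → 0 ≤ q ⬝ᵥ m) → ∀ i, |m i| ≤ C :=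
  demazure_root_polyhedron_bounded_general F hF p
end

section
/- Let Σ be a complete fan in N_ℚ ≅ ℚ^n with ray generators p_1, …, p_n, p'_1, …, p'_k such that B = {p_1, …, p_n} is a basis of N and each p'_j lies in the negative octant of B (i.e., p'_j = Σ a_i p_i with all a_i ≤ 0). Then Cone(p_1, …, p_n) is a maximal cone of Σ, i.e., the rays ρ_1, …, ρ_n generated by p_1, …, p_n are exactly the extremal rays of some maximal cone σ ∈ Σ. -/
open Matrix

/-!
Maximality: a generator `q` of a cone `τ ⊇ Cone(p)` other than the `p i` lies in the negative
octant, so `-q ∈ Cone(p) ⊆ τ`, and strict convexity of `τ` forces `q = 0`; hence `τ ⊆ Cone(p)`.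
Membership: by completeness the interior point `∑ i, p i` lies in some cone `Cone(S)` of the fan.
If some `p i ∉ S`, the `i`-th coordinate functional of the basis `p` is nonpositive on every
generator in `S` (the other `p j` and the negative octant), yet equals `1` at `∑ j, p j`.
So `Cone(p) ⊆ Cone(S)`, and the two are equal by maximality.
-/

def negOctant {ι E : Type*} (R : Type*) [Fintype ι] [Semiring R] [PartialOrder R]
    [AddCommMonoid E] [Module R E] (p : ι → E) : Set E :=
  {q | ∃ a : ι → R, (∀ i, a i ≤ 0) ∧ q = ∑ i, a i • p i}

lemma coneOf_eq_hull {n : ℕ} (S : Finset (Fin n → ℚ)) :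
    coneOf S = PointedCone.hull ℚ (S : Set (Fin n → ℚ)) := by
  classical
  ext x
  rw [SetLike.mem_coe, Submodule.mem_span_finset']
  constructor
  · rintro ⟨c, hc, rfl⟩
    exact ⟨fun v => ⟨c v, hc v⟩, Finset.sum_coe_sort S fun v => c v • v⟩
  · rintro ⟨f, rfl⟩
    refine ⟨fun v => if h : v ∈ S then f ⟨v, h⟩ else 0, fun v => ?_, ?_⟩
    · dsimp only
      split_ifs
      exacts [(f _).2, le_rfl]
    · rw [← Finset.sum_coe_sort S]
      simp

lemma LinearIndependent.intCast {ι κ : Type*} {b : κ → ι → ℤ} (hb : LinearIndependent ℤ b) :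
    LinearIndependent ℚ fun k i => (b k i : ℚ) := by
  rw [← LinearIndependent.iff_fractionRing ℤ ℚ]
  refine hb.map' (LinearMap.compLeft (Int.castAddHom ℚ).toIntLinearMap ι) ?_
  rw [LinearMap.ker_eq_bot]
  exact fun x y h => funext fun i => by simpa using congrFun h i

section NegOctant

variable {ι R E : Type*} [Fintype ι] [Ring R] [PartialOrder R] [AddCommGroup E] [Module R E]

lemma Module.Basis.repr_nonpos_of_mem_negOctant (B : Module.Basis ι R E) {q : E}
    (hq : q ∈ negOctant R B) (i : ι) : B.repr q i ≤ 0 := by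
  obtain ⟨a, ha, rfl⟩ := hq
  rw [B.repr_sum_self]
  exact ha i

lemma neg_mem_hull_of_mem_negOctant [IsOrderedRing R] {p : ι → E} {q : E}
    (hq : q ∈ negOctant R p) : -q ∈ PointedCone.hull R (Set.range p) := by
  obtain ⟨a, ha, rfl⟩ := hq
  rw [← Finset.sum_neg_distrib]
  refine Submodule.sum_mem _ fun i _ => ?_
  rw [← neg_smul]
  exact PointedCone.smul_mem _ (neg_nonneg.2 (ha i)) (PointedCone.subset_hull ⟨i, rfl⟩)

lemma PointedCone.apply_nonneg_of_mem_hull [IsOrderedRing R] (f : E →ₗ[R] R) {s : Set E}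
    (hs : ∀ v ∈ s, 0 ≤ f v) {x : E} (hx : x ∈ PointedCone.hull R s) : 0 ≤ f x := by
  have : PointedCone.hull R s ≤ (PointedCone.positive R R).comap f := Submodule.span_le.2 hs
  exact this hx

lemma Module.Basis.mem_of_sum_mem_hull [IsStrictOrderedRing R] (B : Module.Basis ι R E)
    {s : Set E} (hs : ∀ q ∈ s, q ∉ Set.range B → q ∈ negOctant R B)
    (h : ∑ i, B i ∈ PointedCone.hull R s) (i : ι) : B i ∈ s := by
  by_contra hi
  have hcoord : ∀ v ∈ s, 0 ≤ -B.coord i v := by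
    intro v hv
    rw [neg_nonneg, B.coord_apply]
    by_cases hvB : v ∈ Set.range B
    · obtain ⟨j, rfl⟩ := hvB
      have hji : j ≠ i := fun hji => hi (hji ▸ hv)
      simp [hji]
    · exact B.repr_nonpos_of_mem_negOctant (hs v hv hvB) i
  exact (PointedCone.apply_nonneg_of_mem_hull (-B.coord i) hcoord h).not_gt (by simp)

end NegOctant

lemma coneOf_image_univ {n : ℕ} {ι : Type*} [Fintype ι] [DecidableEq (Fin n → ℚ)]
    (p : ι → Fin n → ℚ) :
    coneOf (Finset.image p Finset.univ) = PointedCone.hull ℚ (Set.range p) := by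
  rw [coneOf_eq_hull, Finset.coe_image, Finset.coe_univ, Set.image_univ]

lemma Fan.coneOf_eq_of_coneOf_subset {n : ℕ} {ι : Type*} [Fintype ι] [DecidableEq (Fin n → ℚ)]
    (F : Fan n) {p : ι → Fin n → ℚ} (hneg : ∀ q ∈ F.rays, q ∉ Set.range p → q ∈ negOctant ℚ p)
    {τ : Set (Fin n → ℚ)} (hτ : τ ∈ F.cones) (h : coneOf (Finset.image p Finset.univ) ⊆ τ) :
    coneOf (Finset.image p Finset.univ) = τ := by
  obtain ⟨T, hT, rfl⟩ := F.polyhedral τ hτ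
  refine h.antisymm ?_
  rw [coneOf_image_univ, coneOf_eq_hull] at h ⊢
  rw [coneOf_eq_hull] at hτ
  refine Submodule.span_le.2 fun v hv => ?_
  by_cases hvp : v ∈ Set.range p
  · exact PointedCone.subset_hull hvp
  · have hnegv := h (neg_mem_hull_of_mem_negOctant (hneg v (hT hv) hvp))
    have hv0 : v = 0 := by
      simpa using F.pointed _ hτ ⟨PointedCone.subset_hull hv, by simpa using hnegv⟩
    exact hv0 ▸ zero_mem _

theorem coneOf_basis_isMaxCone_general {n : ℕ} (F : Fan n) (hF : F.IsComplete)
    (p : Fin n → (Fin n → ℚ))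
    (hbasis : ∃ b : Module.Basis (Fin n) ℤ (Fin n → ℤ), ∀ i j, ((b i) j : ℚ) = p i j)
    (hneg : ∀ q ∈ F.rays, q ∉ Set.range p →
      ∃ a : Fin n → ℚ, (∀ i, a i ≤ 0) ∧ q = ∑ i, a i • p i) :
    coneOf (Finset.image p Finset.univ) ∈ F.cones ∧
      ∀ τ ∈ F.cones, coneOf (Finset.image p Finset.univ) ⊆ τ →
        coneOf (Finset.image p Finset.univ) = τ := by
  obtain ⟨b, hb⟩ := hbasis
  obtain ⟨B, rfl⟩ : ∃ B : Module.Basis (Fin n) ℚ (Fin n → ℚ), ⇑B = p := by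
    have hp : (fun i j => (b i j : ℚ)) = p := funext fun i => funext (hb i)
    exact ⟨basisOfLinearIndependentOfCardEqFinrank' p (hp ▸ b.linearIndependent.intCast)
      (by simp), by simp⟩
  have hmax := fun τ => F.coneOf_eq_of_coneOf_subset hneg (τ := τ)
  obtain ⟨σ, hσ, hsumσ⟩ := Set.mem_iUnion₂.1 (hF.symm ▸ Set.mem_univ (∑ i, B i))
  obtain ⟨S, hS, rfl⟩ := F.polyhedral σ hσ
  rw [coneOf_eq_hull] at hsumσ
  have hBS : ∀ i, B i ∈ S := B.mem_of_sum_mem_hull (fun q hq => hneg q (hS hq)) hsumσ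
  have hsub : coneOf (Finset.image B Finset.univ) ⊆ coneOf S := by
    rw [coneOf_image_univ, coneOf_eq_hull]
    exact Submodule.span_mono (Set.range_subset_iff.2 hBS)
  exact ⟨hmax _ hσ hsub ▸ hσ, hmax⟩

/-- if the ray generators of a complete fan consist of a lattice basis
`p 0, …, p (n-1)` together with vectors lying in the negative octant of that basis,
then `Cone(p 0, …, p (n-1))` is a maximal cone of the fan. -/
theorem coneOf_basis_isMaxCone {n : ℕ} (F : Fan n) (hF : F.IsComplete)
    (p : Fin n → (Fin n → ℚ)) (hmem : ∀ i, p i ∈ F.rays)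
    (hbasis : ∃ b : Module.Basis (Fin n) ℤ (Fin n → ℤ), ∀ i j, ((b i) j : ℚ) = p i j)
    (hneg : ∀ q ∈ F.rays, q ∉ Set.range p →
      ∃ a : Fin n → ℚ, (∀ i, a i ≤ 0) ∧ q = ∑ i, a i • p i) :
    coneOf (Finset.image p Finset.univ) ∈ F.cones ∧
      ∀ τ ∈ F.cones, coneOf (Finset.image p Finset.univ) ⊆ τ →
        coneOf (Finset.image p Finset.univ) = τ :=
  coneOf_basis_isMaxCone_general F hF p hbasis hneg
end
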